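/- arXiv:1901.08736 — 3 statements merged into one kernel-verified Lean document; each statement's English description precedes it below -/
import Mathlib

section
/- Let X be a zero-mean real random variable with σ² = E[X²] that satisfies the Bernstein condition with parameter K > 0. Then for all s ∈ ℝ with 0 ≤ 2 s K² ≤ 1, E[exp(s X² − s σ²)] ≤ exp(s² σ² K²). -/
open MeasureTheory ProbabilityTheory

/-- Bernstein condition: for every integer `p ≥ 2`,
`E[|X|^(2p)] ≤ (1/2) p! σ² K^(2(p-1))`. -/
def BernsteinCond {Ω : Type*} [MeasurableSpace Ω] (μ : Measure Ω) (X : Ω → ℝ)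
    (σ2 K : ℝ) : Prop :=
  ∀ p : ℕ, 2 ≤ p →
    ∫ ω, |X ω| ^ (2 * p) ∂μ ≤ (1 / 2) * (Nat.factorial p) * σ2 * K ^ (2 * (p - 1))

/-- Hilbert-Schmidt (Frobenius) norm of a square real matrix. -/
noncomputable def hsNorm {n : ℕ} (M : Matrix (Fin n) (Fin n) ℝ) : ℝ :=
  Real.sqrt (∑ i, ∑ j, (M i j) ^ 2)

/-- Operator (spectral) norm of a square real matrix. -/
noncomputable def opNorm {n : ℕ} (M : Matrix (Fin n) (Fin n) ℝ) : ℝ :=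
  ‖Matrix.toEuclideanCLM (𝕜 := ℝ) M‖

theorem bernstein_mgf_square_centered
    {Ω : Type*} [MeasurableSpace Ω] (μ : Measure Ω) [IsProbabilityMeasure μ]
    (X : Ω → ℝ) (σ K : ℝ) (hK : 0 < K)
    (hmeas : Measurable X)
    (hmean : ∫ ω, X ω ∂μ = 0)
    (hσ : 0 ≤ σ)
    (hvar : σ ^ 2 = ∫ ω, (X ω) ^ 2 ∂μ)
    (hbern : BernsteinCond μ X (σ ^ 2) K) :
    ∀ s : ℝ, 0 ≤ 2 * s * K ^ 2 → 2 * s * K ^ 2 ≤ 1 →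
      ∫ ω, Real.exp (s * (X ω) ^ 2 - s * σ ^ 2) ∂μ ≤ Real.exp (s ^ 2 * σ ^ 2 * K ^ 2) := by
  intro s hs1 hs2
  have hK2 : (0:ℝ) < K ^ 2 := by positivity
  have hs0 : 0 ≤ s := by nlinarith
  rcases hs0.eq_or_lt with h0 | hspos
  · rw [← h0]
    simp
  by_cases hint : Integrable (fun ω => Real.exp (s * X ω ^ 2 - s * σ ^ 2)) μ
  swap
  · rw [integral_undef hint]; positivity
  set r := s * K ^ 2 with hrdef
  have hr0 : 0 < r := by positivity
  have hr1 : r ≤ 1 / 2 := by rw [hrdef]; linarith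
  have hrlt : r < 1 := by linarith
  -- integrability of exp(s X²)
  have hexp_int : Integrable (fun ω => Real.exp (s * X ω ^ 2)) μ := by
    have h := hint.const_mul (Real.exp (s * σ ^ 2))
    refine h.congr (ae_of_all _ fun ω => ?_)
    show Real.exp (s * σ ^ 2) * Real.exp (s * X ω ^ 2 - s * σ ^ 2) = Real.exp (s * X ω ^ 2)
    rw [← Real.exp_add]; ring_nf
  -- pointwise power bound
  have hterm : ∀ (x : ℝ) (p : ℕ),
      x ^ (2 * p) ≤ ((p.factorial : ℝ) / s ^ p) * Real.exp (s * x ^ 2) := by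
    intro x p
    have h1 : (s * x ^ 2) ^ p / (p.factorial : ℝ) ≤ Real.exp (s * x ^ 2) :=
      Real.pow_div_factorial_le_exp (s * x ^ 2) (by positivity) p
    have h2 : (s * x ^ 2) ^ p = s ^ p * x ^ (2 * p) := by
      rw [mul_pow, pow_mul]
    have hp : (0:ℝ) < (p.factorial : ℝ) := by positivity
    have hsp : (0:ℝ) < s ^ p := by positivity
    rw [div_mul_eq_mul_div, le_div_iff₀ hsp]
    rw [div_le_iff₀ hp] at h1
    nlinarith [h1, h2]
  have hXp_int : ∀ p : ℕ, Integrable (fun ω => X ω ^ (2 * p)) μ := by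
    intro p
    refine Integrable.mono' (hexp_int.const_mul ((p.factorial : ℝ) / s ^ p))
      ((hmeas.pow_const _).aestronglyMeasurable) (ae_of_all _ fun ω => ?_)
    rw [Real.norm_eq_abs, abs_pow, Even.pow_abs (even_two_mul p)]
    exact hterm (X ω) p
  have hIeq : ∀ p : ℕ, ∫ ω, |X ω| ^ (2 * p) ∂μ = ∫ ω, X ω ^ (2 * p) ∂μ := by
    intro p
    refine integral_congr_ae (ae_of_all _ fun ω => ?_)
    show |X ω| ^ (2 * p) = X ω ^ (2 * p)
    rw [Even.pow_abs (even_two_mul p)]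
  set F : ℕ → Ω → ℝ := fun p ω => (s * X ω ^ 2) ^ p / (p.factorial : ℝ) with hFdef
  have hF_eq : ∀ p, F p = fun ω => (s ^ p / (p.factorial : ℝ)) * X ω ^ (2 * p) := by
    intro p; funext ω
    rw [hFdef]; simp only
    rw [mul_pow, pow_mul]; ring
  have hF_int : ∀ p, Integrable (F p) μ := by
    intro p; rw [hF_eq p]; exact (hXp_int p).const_mul _
  set a : ℕ → ℝ := fun p => (s ^ p / (p.factorial : ℝ)) * ∫ ω, X ω ^ (2 * p) ∂μ with hadef
  have hInn : ∀ p : ℕ, 0 ≤ ∫ ω, X ω ^ (2 * p) ∂μ := by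
    intro p
    exact integral_nonneg fun ω => (even_two_mul p).pow_nonneg _
  have ha_nonneg : ∀ p, 0 ≤ a p := by
    intro p; exact mul_nonneg (by positivity) (hInn p)
  set C : ℝ := 1 / 2 * σ ^ 2 * s ^ 2 * K ^ 2 with hCdef
  have hC0 : 0 ≤ C := by positivity
  have htail : ∀ p : ℕ, a (p + 2) ≤ C * r ^ p := by
    intro p
    have hb := hbern (p + 2) (by omega)
    rw [hIeq] at hb
    have hps : p + 2 - 1 = p + 1 := by omega
    rw [hps] at hb
    have hf : (0:ℝ) < ((p + 2).factorial : ℝ) := by positivity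
    have key : s ^ (p + 2) / ((p + 2).factorial : ℝ) *
        (1 / 2 * ((p + 2).factorial : ℝ) * σ ^ 2 * K ^ (2 * (p + 1))) = C * r ^ p := by
      rw [hCdef, hrdef]
      field_simp
      rw [pow_add, mul_pow, pow_mul, pow_add]
      ring
    calc a (p + 2) = s ^ (p + 2) / ((p + 2).factorial : ℝ) * ∫ ω, X ω ^ (2 * (p + 2)) ∂μ := rfl
      _ ≤ s ^ (p + 2) / ((p + 2).factorial : ℝ) *
          (1 / 2 * ((p + 2).factorial : ℝ) * σ ^ 2 * K ^ (2 * (p + 1))) := by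
          apply mul_le_mul_of_nonneg_left hb (by positivity)
      _ = C * r ^ p := key
  have hgeom : Summable (fun p : ℕ => C * r ^ p) :=
    (summable_geometric_of_lt_one hr0.le hrlt).mul_left C
  have hsum_shift : Summable (fun p => a (p + 2)) :=
    Summable.of_nonneg_of_le (fun p => ha_nonneg _) htail hgeom
  have hsuma : Summable a := (summable_nat_add_iff 2).mp hsum_shift
  have hnorm : ∀ p, ∫ ω, ‖F p ω‖ ∂μ = a p := by
    intro p
    rw [hF_eq p, hadef]
    simp only
    rw [← integral_const_mul]
    refine integral_congr_ae (ae_of_all _ fun ω => ?_)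
    show ‖s ^ p / (p.factorial : ℝ) * X ω ^ (2 * p)‖ = s ^ p / (p.factorial : ℝ) * X ω ^ (2 * p)
    rw [Real.norm_eq_abs,
      abs_of_nonneg (mul_nonneg (by positivity) ((even_two_mul p).pow_nonneg _))]
  have hswap : ∑' p, ∫ ω, F p ω ∂μ = ∫ ω, ∑' p, F p ω ∂μ := by
    refine integral_tsum_of_summable_integral_norm hF_int ?_
    simpa only [hnorm] using hsuma
  have hexp_eq : ∀ ω, ∑' p, F p ω = Real.exp (s * X ω ^ 2) := by
    intro ω
    rw [Real.exp_eq_exp_ℝ, NormedSpace.exp_eq_tsum_div]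
  have hIexp : ∫ ω, Real.exp (s * X ω ^ 2) ∂μ = ∑' p, a p := by
    calc ∫ ω, Real.exp (s * X ω ^ 2) ∂μ = ∫ ω, ∑' p, F p ω ∂μ :=
          integral_congr_ae (ae_of_all _ fun ω => (hexp_eq ω).symm)
      _ = ∑' p, ∫ ω, F p ω ∂μ := hswap.symm
      _ = ∑' p, a p := by
          refine tsum_congr fun p => ?_
          rw [hF_eq p, integral_const_mul]
  have ha0 : a 0 = 1 := by
    rw [hadef]; simp
  have ha1 : a 1 = s * σ ^ 2 := by
    rw [hadef]
    simp only [pow_one, Nat.factorial_one, Nat.cast_one, div_one, Nat.mul_one, ← hvar]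
  have hsplit : ∑' p, a p = a 0 + a 1 + ∑' p, a (p + 2) := by
    rw [Summable.tsum_eq_zero_add hsuma, Summable.tsum_eq_zero_add ((summable_nat_add_iff 1).mpr hsuma),
      ← add_assoc]
  have htailsum : ∑' p, a (p + 2) ≤ s ^ 2 * σ ^ 2 * K ^ 2 := by
    have h1 : ∑' p, a (p + 2) ≤ ∑' p : ℕ, C * r ^ p :=
      Summable.tsum_le_tsum htail hsum_shift hgeom
    have h2 : ∑' p : ℕ, C * r ^ p = C * (1 - r)⁻¹ := by
      rw [tsum_mul_left, tsum_geometric_of_lt_one hr0.le hrlt]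
    have h3 : (1 - r)⁻¹ ≤ 2 := by
      have h4 : (1:ℝ)/2 ≤ 1 - r := by linarith
      calc (1 - r)⁻¹ ≤ ((1:ℝ)/2)⁻¹ := by
            apply inv_anti₀ (by norm_num) h4
        _ = 2 := by norm_num
    calc ∑' p, a (p + 2) ≤ C * (1 - r)⁻¹ := by rw [← h2]; exact h1
      _ ≤ C * 2 := by apply mul_le_mul_of_nonneg_left h3 hC0
      _ = s ^ 2 * σ ^ 2 * K ^ 2 := by rw [hCdef]; ring
  have hbound : ∫ ω, Real.exp (s * X ω ^ 2) ∂μ ≤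
      Real.exp (s * σ ^ 2 + s ^ 2 * σ ^ 2 * K ^ 2) := by
    rw [hIexp, hsplit, ha0, ha1]
    have := Real.add_one_le_exp (s * σ ^ 2 + s ^ 2 * σ ^ 2 * K ^ 2)
    linarith [htailsum]
  calc ∫ ω, Real.exp (s * X ω ^ 2 - s * σ ^ 2) ∂μ
      = ∫ ω, Real.exp (-(s * σ ^ 2)) * Real.exp (s * X ω ^ 2) ∂μ := by
        refine integral_congr_ae (ae_of_all _ fun ω => ?_)
        show Real.exp (s * X ω ^ 2 - s * σ ^ 2) =
          Real.exp (-(s * σ ^ 2)) * Real.exp (s * X ω ^ 2)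
        rw [← Real.exp_add]; ring_nf
    _ = Real.exp (-(s * σ ^ 2)) * ∫ ω, Real.exp (s * X ω ^ 2) ∂μ := integral_const_mul _ _
    _ ≤ Real.exp (-(s * σ ^ 2)) * Real.exp (s * σ ^ 2 + s ^ 2 * σ ^ 2 * K ^ 2) := by
        apply mul_le_mul_of_nonneg_left hbound (Real.exp_pos _).le
    _ = Real.exp (s ^ 2 * σ ^ 2 * K ^ 2) := by
        rw [← Real.exp_add]; ring_nf
end

section
/- Let X be a zero-mean real random variable with σ² = E[X²] that satisfies the Bernstein condition with parameter K > 0. Then for all s ∈ ℝ with 0 ≤ 2 s K² ≤ 1, E[exp(s X²)] ≤ exp( (3/2) s σ² ). -/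
open MeasureTheory ProbabilityTheory

open scoped Nat

lemma pow_le_factorial_mul_exp (t : ℝ) (ht : 0 ≤ t) (p : ℕ) :
    t ^ p ≤ p ! * Real.exp t := by
  have h1 : t ^ p / p ! ≤ Real.exp t := by
    calc t ^ p / p ! ≤ ∑ i ∈ Finset.range (p + 1), t ^ i / i ! := by
          refine Finset.single_le_sum (f := fun i => t ^ i / i !) ?_
            (Finset.self_mem_range_succ p)
          intro i _; positivity
      _ ≤ Real.exp t := Real.sum_le_exp_of_nonneg ht _
  have hp : (0:ℝ) < p ! := by positivity
  calc t ^ p = p ! * (t ^ p / p !) := by field_simp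
    _ ≤ p ! * Real.exp t := by gcongr

lemma real_exp_eq_tsum (t : ℝ) : Real.exp t = ∑' n : ℕ, t ^ n / n ! := by
  rw [Real.exp_eq_exp_ℝ, NormedSpace.exp_eq_tsum_div]

theorem bernstein_mgf_square
    {Ω : Type*} [MeasurableSpace Ω] (μ : Measure Ω) [IsProbabilityMeasure μ]
    (X : Ω → ℝ) (σ K : ℝ) (hK : 0 < K)
    (hmeas : Measurable X)
    (hmean : ∫ ω, X ω ∂μ = 0)
    (hσ : 0 ≤ σ)
    (hvar : σ ^ 2 = ∫ ω, (X ω) ^ 2 ∂μ)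
    (hbern : BernsteinCond μ X (σ ^ 2) K) :
    ∀ s : ℝ, 0 ≤ 2 * s * K ^ 2 → 2 * s * K ^ 2 ≤ 1 →
      ∫ ω, Real.exp (s * (X ω) ^ 2) ∂μ ≤ Real.exp ((3 / 2) * s * σ ^ 2) := by
  intro s hs1 hs2
  have hK2 : (0:ℝ) < K ^ 2 := by positivity
  have hs0 : 0 ≤ s := by nlinarith
  rcases eq_or_lt_of_le hs0 with hs | hs
  · simp [← hs]
  by_cases hInt : Integrable (fun ω => Real.exp (s * X ω ^ 2)) μ
  swap
  · rw [integral_undef hInt]; positivity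
  set r : ℝ := s * K ^ 2 with hr_def
  have hr0 : 0 ≤ r := by positivity
  have hr : r ≤ 1 / 2 := by rw [hr_def]; linarith
  have hr1 : r < 1 := by linarith
  set F : ℕ → Ω → ℝ := fun p ω => s ^ p * X ω ^ (2 * p) / p ! with hF_def
  have hFnonneg : ∀ p ω, 0 ≤ F p ω := by
    intro p ω
    have : 0 ≤ X ω ^ (2 * p) := by rw [pow_mul]; positivity
    have : 0 ≤ s ^ p := by positivity
    positivity
  have hFle : ∀ p ω, F p ω ≤ Real.exp (s * X ω ^ 2) := by
    intro p ω
    have ht : 0 ≤ s * X ω ^ 2 := by positivity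
    have h := pow_le_factorial_mul_exp (s * X ω ^ 2) ht p
    rw [mul_pow, ← pow_mul] at h
    have hp : (0:ℝ) < p ! := by positivity
    rw [hF_def]
    rw [div_le_iff₀ hp]
    linarith [h]
  have hFmeas : ∀ p, AEStronglyMeasurable (F p) μ :=
    fun p => (((hmeas.pow_const _).const_mul _).div_const _).aestronglyMeasurable
  have hFint : ∀ p, Integrable (F p) μ := by
    intro p
    refine hInt.mono (hFmeas p) (Filter.Eventually.of_forall fun ω => ?_)
    rw [Real.norm_of_nonneg (hFnonneg p ω), Real.norm_of_nonneg (Real.exp_pos _).le]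
    exact hFle p ω
  set c : ℕ → ℝ := fun p => ∫ ω, F p ω ∂μ with hc_def
  have hcnonneg : ∀ p, 0 ≤ c p := fun p => integral_nonneg (hFnonneg p)
  have hc_eq : ∀ p, c p = s ^ p / p ! * ∫ ω, X ω ^ (2 * p) ∂μ := by
    intro p
    rw [hc_def]
    simp only [hF_def]
    rw [← integral_const_mul]
    congr 1; funext ω; ring
  have hXabs : ∀ p, (∫ ω, X ω ^ (2 * p) ∂μ) = ∫ ω, |X ω| ^ (2 * p) ∂μ := by
    intro p
    congr 1; funext ω
    rw [pow_mul, pow_mul, sq_abs]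
  have hcle : ∀ k : ℕ, c (k + 2) ≤ 1 / 2 * σ ^ 2 * s * r ^ (k + 1) := by
    intro k
    have hb := hbern (k + 2) (by omega)
    rw [hc_eq, hXabs]
    have hsp : (0:ℝ) ≤ s ^ (k + 2) / (k + 2)! := by positivity
    calc s ^ (k + 2) / (k + 2)! * ∫ ω, |X ω| ^ (2 * (k + 2)) ∂μ
        ≤ s ^ (k + 2) / (k + 2)! * (1 / 2 * ((k + 2)! : ℝ) * σ ^ 2 * K ^ (2 * (k + 2 - 1))) :=
          by exact mul_le_mul_of_nonneg_left hb hsp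
      _ = 1 / 2 * σ ^ 2 * s * r ^ (k + 1) := by
          have h2 : (k + 2 - 1) = k + 1 := by omega
          rw [h2, hr_def]
          have hfpos : ((k + 2)! : ℝ) ≠ 0 := by positivity
          field_simp
          ring
  have hD : Summable (fun k : ℕ => 1 / 2 * σ ^ 2 * s * r ^ (k + 1)) := by
    apply Summable.mul_left
    exact ((summable_geometric_of_lt_one hr0 hr1).mul_left r).congr (fun k => by ring)
  have hcsum2 : Summable (fun k : ℕ => c (k + 2)) :=
    Summable.of_nonneg_of_le (fun k => hcnonneg _) hcle hD
  have hcsum : Summable c := by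
    rw [← summable_nat_add_iff 2]
    exact hcsum2
  have hnorm : (fun p => ∫ ω, ‖F p ω‖ ∂μ) = c := by
    funext p
    rw [hc_def]
    congr 1; funext ω
    exact Real.norm_of_nonneg (hFnonneg p ω)
  have hswap : ∑' p, c p = ∫ ω, (∑' p, F p ω) ∂μ := by
    refine integral_tsum_of_summable_integral_norm hFint ?_
    rw [hnorm]; exact hcsum
  have hptw : ∀ ω, (∑' p, F p ω) = Real.exp (s * X ω ^ 2) := by
    intro ω
    rw [real_exp_eq_tsum]
    congr 1; funext p
    rw [hF_def, mul_pow, ← pow_mul]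
  have hiexp : ∫ ω, Real.exp (s * X ω ^ 2) ∂μ = ∑' p, c p := by
    rw [hswap]
    congr 1; funext ω; exact (hptw ω).symm
  -- now bound the sum
  have hc0 : c 0 = 1 := by
    rw [hc_eq]; simp
  have hc1 : c 1 = s * σ ^ 2 := by
    rw [hc_eq]; simp [hvar]
  have htail : (∑' k, c (k + 2)) ≤ 1 / 2 * σ ^ 2 * s := by
    calc (∑' k, c (k + 2)) ≤ ∑' k : ℕ, 1 / 2 * σ ^ 2 * s * r ^ (k + 1) :=
          Summable.tsum_le_tsum hcle hcsum2 hD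
      _ = 1 / 2 * σ ^ 2 * s * (r * (1 - r)⁻¹) := by
          rw [tsum_mul_left]
          congr 1
          rw [← tsum_geometric_of_lt_one hr0 hr1, ← tsum_mul_left]
          congr 1; funext k; ring
      _ ≤ 1 / 2 * σ ^ 2 * s * 1 := by
          have h1 : r * (1 - r)⁻¹ ≤ 1 := by
            rw [mul_inv_le_iff₀ (by linarith)]; linarith
          have h2 : (0:ℝ) ≤ 1 / 2 * σ ^ 2 * s := by positivity
          exact mul_le_mul_of_nonneg_left h1 h2
      _ = 1 / 2 * σ ^ 2 * s := by ring
  have hsum_eq : ∑' p, c p = c 0 + c 1 + ∑' k, c (k + 2) := by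
    rw [Summable.tsum_eq_zero_add hcsum, Summable.tsum_eq_zero_add ((summable_nat_add_iff 1).mpr hcsum)]
    rw [← add_assoc]
  have hbound : ∑' p, c p ≤ 1 + 3 / 2 * s * σ ^ 2 := by
    rw [hsum_eq, hc0, hc1]
    linarith [htail]
  rw [hiexp]
  calc ∑' p, c p ≤ 1 + 3 / 2 * s * σ ^ 2 := hbound
    _ ≤ Real.exp (3 / 2 * s * σ ^ 2) := by
        have := Real.add_one_le_exp (3 / 2 * s * σ ^ 2)
        linarith
end

section
/- Let ξ₁,…,ξₙ be independent zero-mean real random variables such that each ξᵢ satisfies the Bernstein condition with parameter K > 0 (with σᵢ² = E[ξᵢ²]). Let w₁,…,wₙ be nonnegative reals with 2 K² wᵢ ≤ 1 for all i. Then E[ exp( Σᵢ wᵢ ξᵢ² ) ] ≤ exp( (3/2) Σᵢ wᵢ σᵢ² ). -/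
open MeasureTheory ProbabilityTheory

/-!
Expanding the exponential, `E[exp(w ξ²)] = ∑ₚ wᵖ E[ξ²ᵖ] / p!`. The terms `p = 0, 1` give
`1 + w σ²`, and for `p ≥ 2` the Bernstein condition bounds the `p`-th term by
`(1/2) w σ² (w K²)ᵖ⁻¹ ≤ w σ² / 2ᵖ`, so the tail adds at most `w σ² / 2`. Hence
`E[exp(w ξ²)] ≤ 1 + (3/2) w σ² ≤ exp((3/2) w σ²)`, and independence turns the moment
generating function of the sum into the product of these bounds.
-/

open scoped Nat

lemma Real.hasSum_pow_div_factorial (x : ℝ) : HasSum (fun p => x ^ p / p !) (Real.exp x) :=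
  Real.exp_eq_exp_ℝ ▸ NormedSpace.expSeries_div_hasSum_exp x

section

variable {Ω : Type*} [MeasurableSpace Ω] {μ : Measure Ω} {X Y : Ω → ℝ} {σ2 K w : ℝ}

lemma hasSum_integral_pow_div_factorial (hY : ∀ ω, 0 ≤ Y ω) (hYm : AEMeasurable Y μ)
    (hexp : Integrable (fun ω => Real.exp (Y ω)) μ) :
    HasSum (fun p => (∫ ω, Y ω ^ p ∂μ) / p !) (∫ ω, Real.exp (Y ω) ∂μ) := by
  simp_rw [← integral_div]
  refine hasSum_integral_of_dominated_convergence (fun p ω => Y ω ^ p / p !)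
    (fun p => ((hYm.pow_const p).div_const _).aestronglyMeasurable)
    (fun p => ae_of_all _ fun ω =>
      (Real.norm_of_nonneg (div_nonneg (pow_nonneg (hY ω) p) (by positivity))).le)
    (ae_of_all _ fun ω => (Real.hasSum_pow_div_factorial _).summable) ?_
    (ae_of_all _ fun ω => Real.hasSum_pow_div_factorial _)
  simpa only [fun ω => (Real.hasSum_pow_div_factorial (Y ω)).tsum_eq] using hexp

lemma integral_exp_le_of_moments_le [IsProbabilityMeasure μ] (hY : ∀ ω, 0 ≤ Y ω)
    (hYm : AEMeasurable Y μ) {c : ℝ} (h₁ : ∫ ω, Y ω ∂μ ≤ c)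
    (hmom : ∀ p, 2 ≤ p → (∫ ω, Y ω ^ p ∂μ) / p ! ≤ c / 2 ^ p) :
    ∫ ω, Real.exp (Y ω) ∂μ ≤ Real.exp (3 / 2 * c) := by
  by_cases hexp : Integrable (fun ω => Real.exp (Y ω)) μ
  swap
  · rw [integral_undef hexp]
    positivity
  have hsum := hasSum_integral_pow_div_factorial hY hYm hexp
  have htail : ∑' p, (∫ ω, Y ω ^ (p + 2) ∂μ) / (p + 2)! ≤ c / 2 := by
    calc ∑' p, (∫ ω, Y ω ^ (p + 2) ∂μ) / (p + 2)!
        ≤ ∑' p : ℕ, c / 2 / 2 / 2 ^ p :=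
          Summable.tsum_le_tsum (fun p => (hmom (p + 2) le_add_self).trans_eq (by ring))
            ((summable_nat_add_iff 2).2 hsum.summable) (summable_geometric_two' _)
      _ = c / 2 := tsum_geometric_two' _
  calc ∫ ω, Real.exp (Y ω) ∂μ
      = 1 + ∫ ω, Y ω ∂μ + ∑' p, (∫ ω, Y ω ^ (p + 2) ∂μ) / (p + 2)! := by
        rw [← hsum.tsum_eq, ← hsum.summable.sum_add_tsum_nat_add 2]
        simp [Finset.sum_range_succ]
    _ ≤ 3 / 2 * c + 1 := by linarith
    _ ≤ Real.exp (3 / 2 * c) := Real.add_one_le_exp _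

lemma BernsteinCond.integral_mul_sq_pow_div_factorial_le (h : BernsteinCond μ X σ2 K)
    (hσ2 : 0 ≤ σ2) (hw : 0 ≤ w) (hwK : 2 * K ^ 2 * w ≤ 1) {p : ℕ} (hp : 2 ≤ p) :
    (∫ ω, (w * X ω ^ 2) ^ p ∂μ) / p ! ≤ w * σ2 / 2 ^ p := by
  obtain ⟨q, rfl⟩ : ∃ q, p = q + 1 := ⟨p - 1, by omega⟩
  have hmoment : ∫ ω, (w * X ω ^ 2) ^ (q + 1) ∂μ
      = w ^ (q + 1) * ∫ ω, |X ω| ^ (2 * (q + 1)) ∂μ := by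
    rw [← integral_const_mul]
    congr 1 with ω
    rw [pow_mul, sq_abs, mul_pow]
  have hwK' : w * K ^ 2 ≤ 1 / 2 := by linarith
  calc (∫ ω, (w * X ω ^ 2) ^ (q + 1) ∂μ) / (q + 1)!
      ≤ w ^ (q + 1) * (1 / 2 * (q + 1)! * σ2 * K ^ (2 * q)) / (q + 1)! := by
        rw [hmoment]
        gcongr
        exact h (q + 1) hp
    _ = w * σ2 / 2 * (w * K ^ 2) ^ q := by
        field_simp
        ring
    _ ≤ w * σ2 / 2 * (1 / 2) ^ q := by gcongr
    _ = w * σ2 / 2 ^ (q + 1) := by rw [one_div, inv_pow, pow_succ]; field_simp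

lemma BernsteinCond.integral_exp_mul_sq_le [IsProbabilityMeasure μ] (h : BernsteinCond μ X σ2 K)
    (hX : AEMeasurable X μ) (hvar : σ2 = ∫ ω, X ω ^ 2 ∂μ) (hw : 0 ≤ w)
    (hwK : 2 * K ^ 2 * w ≤ 1) :
    ∫ ω, Real.exp (w * X ω ^ 2) ∂μ ≤ Real.exp (3 / 2 * (w * σ2)) := by
  have hσ2 : 0 ≤ σ2 := hvar ▸ integral_nonneg fun ω => sq_nonneg (X ω)
  refine integral_exp_le_of_moments_le (fun ω => by positivity) ((hX.pow_const 2).const_mul w) ?_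
    fun p hp => h.integral_mul_sq_pow_div_factorial_le hσ2 hw hwK hp
  rw [integral_const_mul, hvar]

end

theorem mgf_weighted_sum_squares_bernstein_general
    {Ω : Type*} [MeasurableSpace Ω] (μ : Measure Ω) [IsProbabilityMeasure μ]
    {n : ℕ} (ξ : Fin n → Ω → ℝ) (σ : Fin n → ℝ) (K : ℝ)
    (hmeas : ∀ i, Measurable (ξ i))
    (hindep : iIndepFun ξ μ)
    (hvar : ∀ i, (σ i) ^ 2 = ∫ ω, (ξ i ω) ^ 2 ∂μ)
    (hbern : ∀ i, BernsteinCond μ (ξ i) ((σ i) ^ 2) K)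
    (w : Fin n → ℝ) (hw : ∀ i, 0 ≤ w i) (hcond : ∀ i, 2 * K ^ 2 * w i ≤ 1) :
    ∫ ω, Real.exp (∑ i, w i * (ξ i ω) ^ 2) ∂μ
      ≤ Real.exp ((3 / 2) * ∑ i, w i * (σ i) ^ 2) := by
  have hindepY : iIndepFun (fun i ω => w i * ξ i ω ^ 2) μ :=
    hindep.comp _ fun i => (measurable_id.pow_const 2).const_mul (w i)
  calc ∫ ω, Real.exp (∑ i, w i * ξ i ω ^ 2) ∂μ
      = ∏ i, mgf (fun ω => w i * ξ i ω ^ 2) μ 1 := by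
        rw [← hindepY.mgf_sum fun i => ((hmeas i).pow_const 2).const_mul (w i)]
        simp [mgf, Finset.sum_apply]
    _ ≤ ∏ i, Real.exp (3 / 2 * (w i * σ i ^ 2)) :=
        Finset.prod_le_prod (fun i _ => mgf_nonneg) fun i _ => by
          simpa [mgf] using (hbern i).integral_exp_mul_sq_le (hmeas i).aemeasurable
            (hvar i) (hw i) (hcond i)
    _ = Real.exp (3 / 2 * ∑ i, w i * σ i ^ 2) := by
        rw [← Real.exp_sum, Finset.mul_sum]

theorem mgf_weighted_sum_squares_bernstein
    {Ω : Type*} [MeasurableSpace Ω] (μ : Measure Ω) [IsProbabilityMeasure μ]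
    {n : ℕ} (ξ : Fin n → Ω → ℝ) (σ : Fin n → ℝ) (K : ℝ) (hK : 0 < K)
    (hmeas : ∀ i, Measurable (ξ i))
    (hindep : iIndepFun ξ μ)
    (hmean : ∀ i, ∫ ω, ξ i ω ∂μ = 0)
    (hσ : ∀ i, 0 ≤ σ i)
    (hvar : ∀ i, (σ i) ^ 2 = ∫ ω, (ξ i ω) ^ 2 ∂μ)
    (hbern : ∀ i, BernsteinCond μ (ξ i) ((σ i) ^ 2) K)
    (w : Fin n → ℝ) (hw : ∀ i, 0 ≤ w i) (hcond : ∀ i, 2 * K ^ 2 * w i ≤ 1) :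
    ∫ ω, Real.exp (∑ i, w i * (ξ i ω) ^ 2) ∂μ
      ≤ Real.exp ((3 / 2) * ∑ i, w i * (σ i) ^ 2) :=
  mgf_weighted_sum_squares_bernstein_general μ ξ σ K hmeas hindep hvar hbern w hw hcond
end
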